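/- arXiv:2010.13969 — 2 statements merged into one kernel-verified Lean document; each statement's English description precedes it below -/
import Mathlib

section
/- Let (G,m,w,B) be a connected weighted finite graph with boundary. If σ_i = μ_i for some i with 2 ≤ i ≤ |B|, then there exists a nonzero function v : V → ℝ with −Δv = μ_i v on V, v(y) = 0 for every y ∈ Ω, and Δv(y) = 0 for every y ∈ Ω. -/
open Finset Real

namespace GraphSteklov

variable {V : Type*} [Fintype V] [DecidableEq V]

/-- The weighted graph Laplacian: `Δu(x) = (1/m_x) Σ_y (u(y)-u(x)) w_{xy}`. -/
noncomputable def lap (m : V → ℝ) (w : V → V → ℝ) (u : V → ℝ) (x : V) : ℝ :=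
  (1 / m x) * ∑ y, (u y - u x) * w x y

/-- Weighted inner product of two functions over a finite set `S` of vertices:
`⟨u,v⟩_S = Σ_{x ∈ S} u(x) v(x) m_x`. -/
def iprodOn (m : V → ℝ) (S : Finset V) (u v : V → ℝ) : ℝ :=
  ∑ x ∈ S, u x * v x * m x

/-- Full weighted inner product `⟨u,v⟩ = Σ_{x ∈ V} u(x) v(x) m_x`. -/
def iprod (m : V → ℝ) (u v : V → ℝ) : ℝ := ∑ x, u x * v x * m x

/-- `(G,m,w)` is a weighted graph: positive vertex measure, symmetric edge weight,
positive exactly on edges. -/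
def IsWeight (G : SimpleGraph V) (m : V → ℝ) (w : V → V → ℝ) : Prop :=
  (∀ x, 0 < m x) ∧ (∀ x y, w x y = w y x) ∧
  (∀ x y, G.Adj x y → 0 < w x y) ∧ (∀ x y, ¬ G.Adj x y → w x y = 0)

/-- `B` is a vertex-boundary of `G`: no two boundary vertices are adjacent, and every
boundary vertex is adjacent to some interior vertex. -/
def IsBoundary (G : SimpleGraph V) (B : Finset V) : Prop :=
  (∀ x ∈ B, ∀ y ∈ B, ¬ G.Adj x y) ∧ (∀ x ∈ B, ∃ y, y ∉ B ∧ G.Adj x y)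

/-- `μ` is the nondecreasing sequence of eigenvalues (with multiplicity) of `-Δ`,
witnessed by an orthonormal (w.r.t. the measure `m`) basis of eigenfunctions. -/
def IsLapSpectrum (m : V → ℝ) (w : V → V → ℝ) (μ : Fin (Fintype.card V) → ℝ) : Prop :=
  Monotone μ ∧ ∃ v : Fin (Fintype.card V) → V → ℝ,
    (∀ i x, - lap m w (v i) x = μ i * v i x) ∧
    (∀ i j, iprod m (v i) (v j) = if i = j then 1 else 0)

/-- `σ` is the nondecreasing sequence of Steklov eigenvalues (with multiplicity) of
the Dirichlet-to-Neumann map of `(G,m,w,B)`: it is witnessed by a family of functions,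
harmonic in the interior, whose restrictions to `B` are orthonormal w.r.t. `⟨·,·⟩_B`
and whose normal derivatives `∂u/∂n = -Δu` on `B` satisfy the eigenvalue equations. -/
def IsSteklovSpectrum (m : V → ℝ) (w : V → V → ℝ) (B : Finset V)
    (σ : Fin B.card → ℝ) : Prop :=
  Monotone σ ∧ ∃ u : Fin B.card → V → ℝ,
    (∀ i y, y ∉ B → lap m w (u i) y = 0) ∧
    (∀ i x, x ∈ B → - lap m w (u i) x = σ i * u i x) ∧
    (∀ i j, iprodOn m B (u i) (u j) = if i = j then 1 else 0)

/-- `Mu2LB m w S c` says that the second smallest Laplacian eigenvalue `μ₂` of the induced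
weighted graph on `S` is `≥ c`, expressed via the variational characterization
`μ₂(S) = min { ⟨du,du⟩_S / ⟨u,u⟩_S : u ≠ 0, ⟨u,1⟩_S = 0 }`. -/
def Mu2LB (m : V → ℝ) (w : V → V → ℝ) (S : Finset V) (c : ℝ) : Prop :=
  ∀ u : V → ℝ, (∑ y ∈ S, u y * m y) = 0 →
    c * (∑ y ∈ S, u y ^ 2 * m y) ≤ (1 / 2) * ∑ x ∈ S, ∑ y ∈ S, (u y - u x) ^ 2 * w x y

/-- The carré du champ operator `Γ(f,g) = ½(Δ(fg) - fΔg - gΔf)`. -/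
noncomputable def gammaOp (m : V → ℝ) (w : V → V → ℝ) (f g : V → ℝ) (x : V) : ℝ :=
  (lap m w (f * g) x - f x * lap m w g x - g x * lap m w f x) / 2

/-- The iterated carré du champ operator `Γ₂(f,f) = ½ΔΓ(f,f) - Γ(f,Δf)`. -/
noncomputable def gamma2Op (m : V → ℝ) (w : V → V → ℝ) (f : V → ℝ) (x : V) : ℝ :=
  (lap m w (gammaOp m w f f) x) / 2 - gammaOp m w f (lap m w f) x

/-- Edge connectivity: the least number of edges whose deletion disconnects `G`. -/
noncomputable def edgeConn (G : SimpleGraph V) : ℕ :=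
  sInf {n | ∃ F : Finset (Sym2 V), ↑F ⊆ G.edgeSet ∧ F.card = n ∧
    ¬ (G.deleteEdges ↑F).Connected}

/-- Vertex connectivity: the least number of vertices whose deletion disconnects `G`
(with the convention `v(K_n) = n - 1`, realized by allowing deletions leaving at most
one vertex). -/
noncomputable def vertConn (G : SimpleGraph V) : ℕ :=
  sInf {n | ∃ S : Finset V, S.card = n ∧
    (¬ (G.induce (↑(Sᶜ : Finset V) : Set V)).Connected ∨ (Sᶜ : Finset V).card ≤ 1)}

/-- Edge weights of the weighted path on `Fin n` (vertices `0,…,n-1`), where all edges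
have weight `1` except the edge incident to the vertex `0`, which has weight `lam`. -/
def pathW (lam : ℝ) {n : ℕ} (a b : Fin n) : ℝ :=
  if a.val + 1 = b.val ∨ b.val + 1 = a.val then
    (if a.val = 0 ∨ b.val = 0 then lam else 1) else 0

/-- The Laplacian (with unit vertex measure) of the weighted path `pathW lam`. -/
noncomputable def pathLap (lam : ℝ) {n : ℕ} (u : Fin n → ℝ) (a : Fin n) : ℝ :=
  ∑ b, (u b - u a) * pathW lam a b

/-- The largest Laplacian eigenvalue of the path `P_i` on `i` vertices with unit weight. -/
noncomputable def pathTopEig (i : ℕ) : ℝ :=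
  sSup {r | ∃ u : Fin i → ℝ, u ≠ 0 ∧ ∀ a, - pathLap 1 u a = r * u a}

/-- `𝒫(k,λ)`: the first Dirichlet eigenvalue of the path with vertices `0,1,…,k`, unit
vertex measure, edge weights `w_{01} = λ` and `w_{j,j+1} = 1` for `j ≥ 1`, and boundary
vertex `0`: the smallest eigenvalue of `-Δ` on functions vanishing at `0`. -/
noncomputable def pathDirichlet (k : ℕ) (lam : ℝ) : ℝ :=
  sInf {r | ∃ u : Fin (k + 1) → ℝ, u ≠ 0 ∧ u 0 = 0 ∧
    ∀ a : Fin (k + 1), a.val ≠ 0 → - pathLap lam u a = r * u a}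


set_option linter.unusedSectionVars false

lemma iprodOn_comm (m : V → ℝ) (S : Finset V) (u v : V → ℝ) :
    iprodOn m S u v = iprodOn m S v u :=
  Finset.sum_congr rfl fun x _ => by ring

lemma iprod_comm (m : V → ℝ) (u v : V → ℝ) : iprod m u v = iprod m v u :=
  Finset.sum_congr rfl fun x _ => by ring

lemma iprodOn_sum_left {ι : Type*} (m : V → ℝ) (S : Finset V) (s : Finset ι)
    (a : ι → ℝ) (f : ι → V → ℝ) (g : V → ℝ) :
    iprodOn m S (fun x => ∑ j ∈ s, a j * f j x) g = ∑ j ∈ s, a j * iprodOn m S (f j) g := by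
  unfold iprodOn
  have : ∀ x ∈ S, (∑ j ∈ s, a j * f j x) * g x * m x
      = ∑ j ∈ s, a j * (f j x * g x * m x) := fun x _ => by
    rw [Finset.sum_mul, Finset.sum_mul]
    exact Finset.sum_congr rfl fun j _ => by ring
  rw [Finset.sum_congr rfl this, Finset.sum_comm]
  exact Finset.sum_congr rfl fun j _ => by rw [Finset.mul_sum]

lemma iprod_sum_left {ι : Type*} (m : V → ℝ) (s : Finset ι)
    (a : ι → ℝ) (f : ι → V → ℝ) (g : V → ℝ) :
    iprod m (fun x => ∑ j ∈ s, a j * f j x) g = ∑ j ∈ s, a j * iprod m (f j) g :=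
  iprodOn_sum_left m Finset.univ s a f g

lemma lap_sum {ι : Type*} (m : V → ℝ) (w : V → V → ℝ) (s : Finset ι)
    (a : ι → ℝ) (f : ι → V → ℝ) (z : V) :
    lap m w (fun x => ∑ j ∈ s, a j * f j x) z = ∑ j ∈ s, a j * lap m w (f j) z := by
  unfold lap
  have h : ∀ y, ((∑ j ∈ s, a j * f j y) - ∑ j ∈ s, a j * f j z) * w z y
      = ∑ j ∈ s, a j * ((f j y - f j z) * w z y) := fun y => by
    rw [← Finset.sum_sub_distrib, Finset.sum_mul]
    exact Finset.sum_congr rfl fun j _ => by ring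
  simp only [h]
  rw [Finset.sum_comm, Finset.mul_sum]
  exact Finset.sum_congr rfl fun j _ => by
    rw [Finset.mul_sum, Finset.mul_sum, Finset.mul_sum]
    exact Finset.sum_congr rfl fun y _ => by ring

lemma green (m : V → ℝ) (w : V → V → ℝ) (hm : ∀ x, 0 < m x)
    (hw : ∀ x y, w x y = w y x) (u : V → ℝ) :
    iprod m (fun x => - lap m w u x) u = (1/2) * ∑ x, ∑ y, (u y - u x)^2 * w x y := by
  have h1 : iprod m (fun x => - lap m w u x) u
      = ∑ x, ∑ y, (u x - u y) * u x * w x y := by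
    unfold iprod lap
    refine Finset.sum_congr rfl fun x _ => ?_
    have hx : m x ≠ 0 := (hm x).ne'
    have e : (fun x => -(1 / m x * ∑ y, (u y - u x) * w x y)) x * u x * m x
        = (1 / m x * m x) * ((∑ y, (u y - u x) * w x y) * (-u x)) := by ring
    rw [e, one_div_mul_cancel hx, one_mul, Finset.sum_mul]
    exact Finset.sum_congr rfl fun y _ => by ring
  have h2 : (∑ x, ∑ y, (u x - u y) * u x * w x y)
      = ∑ x, ∑ y, (u y - u x) * u y * w x y := by
    rw [Finset.sum_comm]
    exact Finset.sum_congr rfl fun x _ => Finset.sum_congr rfl fun y _ => by rw [hw y x]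
  have h3 : (∑ x, ∑ y, (u x - u y) * u x * w x y) + ∑ x, ∑ y, (u y - u x) * u y * w x y
      = ∑ x, ∑ y, (u y - u x)^2 * w x y := by
    rw [← Finset.sum_add_distrib]
    refine Finset.sum_congr rfl fun x _ => ?_
    rw [← Finset.sum_add_distrib]
    exact Finset.sum_congr rfl fun y _ => by ring
  rw [h1]
  linarith [h2, h3]

lemma eigen_lb (m : V → ℝ) (w : V → V → ℝ)
    (μ : Fin (Fintype.card V) → ℝ) (hmono : Monotone μ)
    (v : Fin (Fintype.card V) → V → ℝ)
    (hveig : ∀ j x, - lap m w (v j) x = μ j * v j x)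
    (ho : ∀ j k, iprod m (v j) (v k) = if j = k then 1 else 0)
    (i' : Fin (Fintype.card V)) (U : V → ℝ)
    (hU : ∀ j, j < i' → iprod m U (v j) = 0) :
    μ i' * iprod m U U ≤ iprod m (fun x => - lap m w U x) U := by
  haveI : Nonempty (Fin (Fintype.card V)) := ⟨i'⟩
  have hli : LinearIndependent ℝ v := by
    rw [linearIndependent_iff']
    intro s g hg k hk
    have h0 : iprod m (fun x => ∑ j ∈ s, g j * v j x) (v k) = 0 := by
      have : (fun x => ∑ j ∈ s, g j * v j x) = (0 : V → ℝ) := by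
        funext x
        have := congrFun hg x
        simpa [Finset.sum_apply] using this
      rw [this]
      simp [iprod]
    rw [iprod_sum_left] at h0
    simp only [ho, mul_ite, mul_one, mul_zero] at h0
    rwa [Finset.sum_ite_eq' s k g, if_pos hk] at h0
  have hcard : Fintype.card (Fin (Fintype.card V)) = Module.finrank ℝ (V → ℝ) := by
    simp [Module.finrank_fintype_fun_eq_card]
  let b := basisOfLinearIndependentOfCardEqFinrank hli hcard
  have hb : ⇑b = v := coe_basisOfLinearIndependentOfCardEqFinrank hli hcard
  set c : Fin (Fintype.card V) → ℝ := fun j => b.repr U j with hc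
  have hrep : U = fun x => ∑ j, c j * v j x := by
    have := b.sum_repr U
    rw [hb] at this
    funext x
    rw [← this]
    simp [Finset.sum_apply, hc]
  have hck : ∀ k, iprod m U (v k) = c k := by
    intro k
    have h := iprod_sum_left m Finset.univ c v (v k)
    simp only [ho, mul_ite, mul_one, mul_zero] at h
    rw [Finset.sum_ite_eq' Finset.univ k c, if_pos (Finset.mem_univ k)] at h
    rw [← hrep] at h
    exact h
  have hkv : ∀ k, iprod m (v k) U = c k := fun k => by rw [iprod_comm]; exact hck k
  have hUU : iprod m U U = ∑ j, c j ^ 2 := by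
    have h := iprod_sum_left m Finset.univ c v U
    rw [← hrep] at h
    rw [h]
    exact Finset.sum_congr rfl fun j _ => by rw [hkv j]; ring
  have hlapU : (fun x => - lap m w U x) = fun x => ∑ j, (c j * μ j) * v j x := by
    funext x
    have h : lap m w U x = ∑ j, c j * lap m w (v j) x := by
      have := lap_sum m w Finset.univ c v x
      rw [← hrep] at this
      exact this
    rw [h, ← Finset.sum_neg_distrib]
    exact Finset.sum_congr rfl fun j _ => by linear_combination (c j) * (hveig j x)
  have hQ : iprod m (fun x => - lap m w U x) U = ∑ j, c j ^ 2 * μ j := by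
    rw [hlapU, iprod_sum_left]
    exact Finset.sum_congr rfl fun j _ => by rw [hkv j]; ring
  rw [hQ, hUU, Finset.mul_sum]
  apply Finset.sum_le_sum
  intro j _
  rcases lt_or_ge j i' with h | h
  · have : c j = 0 := by rw [← hck j]; exact hU j h
    simp [this]
  · have := hmono h
    nlinarith [sq_nonneg (c j)]

lemma const_of_energy_zero (G : SimpleGraph V) (hG : G.Connected)
    (w : V → V → ℝ) (hwpos : ∀ x y, G.Adj x y → 0 < w x y) (hwnn : ∀ x y, 0 ≤ w x y)
    (u : V → ℝ) (h : ∑ x, ∑ y, (u y - u x)^2 * w x y = 0) :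
    ∀ x y, u x = u y := by
  have hterm : ∀ x y, (u y - u x)^2 * w x y = 0 := by
    intro x y
    have h1 : ∀ x ∈ (univ : Finset V), (0:ℝ) ≤ ∑ y, (u y - u x)^2 * w x y := fun x _ =>
      Finset.sum_nonneg fun y _ => mul_nonneg (sq_nonneg _) (hwnn x y)
    have h2 := (Finset.sum_eq_zero_iff_of_nonneg h1).mp h x (Finset.mem_univ x)
    have h3 : ∀ y ∈ (univ : Finset V), (0:ℝ) ≤ (u y - u x)^2 * w x y := fun y _ =>
      mul_nonneg (sq_nonneg _) (hwnn x y)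
    exact (Finset.sum_eq_zero_iff_of_nonneg h3).mp h2 y (Finset.mem_univ y)
  have hadj : ∀ x y, G.Adj x y → u x = u y := by
    intro x y hxy
    have h0 := hterm x y
    have hw := hwpos x y hxy
    have h4 : (u y - u x)^2 = 0 := by
      rcases mul_eq_zero.mp h0 with h' | h'
      · exact h'
      · exact absurd h' hw.ne'
    have := pow_eq_zero_iff (n := 2) (by norm_num) |>.mp h4
    linarith
  intro x y
  obtain ⟨p⟩ := hG.preconnected x y
  induction p with
  | nil => rfl
  | cons hadj' p ih => exact (hadj _ _ hadj').trans ih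

set_option maxHeartbeats 1000000 in
/-- If `σ_i = μ_i` for some `2 ≤ i ≤ |B|` (here `i : Fin B.card` with
`1 ≤ i.val`, i.e. one-based index at least `2`), then there is a nonzero eigenfunction `v`
of `-Δ` with eigenvalue `μ_i` vanishing on the interior `Ω = V \ B` and with `Δv = 0` on `Ω`. -/
theorem rigidity_gives_special_eigenfunction
    {V : Type*} [Fintype V] [DecidableEq V]
    (G : SimpleGraph V) (m : V → ℝ) (w : V → V → ℝ) (B : Finset V)
    (hG : G.Connected) (hW : IsWeight G m w) (hB : IsBoundary G B)
    (μ : Fin (Fintype.card V) → ℝ) (hμ : IsLapSpectrum m w μ)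
    (σ : Fin B.card → ℝ) (hσ : IsSteklovSpectrum m w B σ)
    (i : Fin B.card) (hi : 1 ≤ i.val)
    (heq : σ i = μ (Fin.castLE (Finset.card_le_univ B) i)) :
    ∃ v : V → ℝ, v ≠ 0 ∧
      (∀ x, - lap m w v x = μ (Fin.castLE (Finset.card_le_univ B) i) * v x) ∧
      (∀ y, y ∉ B → v y = 0) ∧
      (∀ y, y ∉ B → lap m w v y = 0) := by
  obtain ⟨hm, hwsymm, hwpos, hwzero⟩ := hW
  obtain ⟨hμmono, v, hveig, hvortho⟩ := hμ
  obtain ⟨hσmono, u, huharm, hueig, huortho⟩ := hσ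
  have hwnn : ∀ x y, 0 ≤ w x y := fun x y => by
    by_cases h : G.Adj x y
    · exact (hwpos x y h).le
    · exact le_of_eq (hwzero x y h).symm
  set i' : Fin (Fintype.card V) := Fin.castLE (Finset.card_le_univ B) i with hi'
  have hle : B.card ≤ Fintype.card V := Finset.card_le_univ B
  have hcard2 : 2 ≤ Fintype.card V := le_trans (by omega : 2 ≤ B.card) hle
  -- Q(v j) = μ j
  have hQv : ∀ j, iprod m (fun x => - lap m w (v j) x) (v j) = μ j := by
    intro j
    have h1 : (fun x => - lap m w (v j) x) = fun x => μ j * v j x := by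
      funext x; exact hveig j x
    rw [h1]
    have h2 : iprod m (fun x => μ j * v j x) (v j) = μ j * iprod m (v j) (v j) := by
      unfold iprod; rw [Finset.mul_sum]; exact Finset.sum_congr rfl fun x _ => by ring
    rw [h2, hvortho j j, if_pos rfl, mul_one]
  have hμnn : ∀ j, 0 ≤ μ j := by
    intro j
    rw [← hQv j, green m w hm hwsymm]
    have : (0:ℝ) ≤ ∑ x, ∑ y, (v j y - v j x)^2 * w x y :=
      Finset.sum_nonneg fun x _ => Finset.sum_nonneg fun y _ =>
        mul_nonneg (sq_nonneg _) (hwnn x y)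
    linarith
  by_cases hσpos : 0 < σ i
  case neg =>
    -- degenerate case: derive a contradiction
    exfalso
    set j0 : Fin (Fintype.card V) := ⟨0, by omega⟩ with hj0
    set j1 : Fin (Fintype.card V) := ⟨1, by omega⟩ with hj1
    have h01 : μ j0 ≤ μ j1 := hμmono (by simp [hj0, hj1, Fin.le_def])
    have h1i : μ j1 ≤ μ i' := hμmono (by simp [hj1, Fin.le_def, hi']; omega)
    have hμi0 : μ i' ≤ 0 := by rw [← heq]; exact not_lt.mp hσpos
    have hz0 : μ j0 = 0 := le_antisymm (by linarith) (hμnn j0)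
    have hz1 : μ j1 = 0 := le_antisymm (by linarith) (hμnn j1)
    have hconst : ∀ j, μ j = 0 → ∀ x y, v j x = v j y := by
      intro j hj
      apply const_of_energy_zero G hG w hwpos hwnn
      have := hQv j
      rw [green m w hm hwsymm, hj] at this
      linarith
    obtain ⟨x0⟩ : Nonempty V := Fintype.card_pos_iff.mp (by omega)
    have hc0 : ∀ x, v j0 x = v j0 x0 := fun x => hconst j0 hz0 x x0
    have hc1 : ∀ x, v j1 x = v j1 x0 := fun x => hconst j1 hz1 x x0
    set M : ℝ := ∑ x, m x
    have e01 : v j0 x0 * v j1 x0 * M = 0 := by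
      have := hvortho j0 j1
      rw [if_neg (by simp [hj0, hj1, Fin.ext_iff])] at this
      rw [← this]
      unfold iprod
      rw [Finset.mul_sum]
      exact (Finset.sum_congr rfl fun x _ => by rw [hc0 x, hc1 x]).symm
    have e00 : v j0 x0 * v j0 x0 * M = 1 := by
      have := hvortho j0 j0
      rw [if_pos rfl] at this
      rw [← this]
      unfold iprod
      rw [Finset.mul_sum]
      exact (Finset.sum_congr rfl fun x _ => by rw [hc0 x]).symm
    have e11 : v j1 x0 * v j1 x0 * M = 1 := by
      have := hvortho j1 j1
      rw [if_pos rfl] at this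
      rw [← this]
      unfold iprod
      rw [Finset.mul_sum]
      exact (Finset.sum_congr rfl fun x _ => by rw [hc1 x]).symm
    nlinarith [e01, e00, e11]
  case pos =>
    -- main case
    set N := i.val with hN
    have hNB : N < B.card := i.isLt
    set jf : Fin (N+1) → Fin B.card := fun j => ⟨j.val, by omega⟩ with hjf
    set kf : Fin N → Fin (Fintype.card V) := fun k => ⟨k.val, by omega⟩ with hkf
    set Mt : Matrix (Fin N) (Fin (N+1)) ℝ :=
      Matrix.of fun k j => iprod m (u (jf j)) (v (kf k)) with hMt
    have hker : LinearMap.ker Mt.mulVecLin ≠ ⊥ := by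
      apply LinearMap.ker_ne_bot_of_finrank_lt
      simp [Module.finrank_fintype_fun_eq_card]
    obtain ⟨a, haker, ha0⟩ := Submodule.exists_mem_ne_zero_of_ne_bot hker
    have haM : ∀ k : Fin N, ∑ j, Mt k j * a j = 0 := by
      intro k
      have : Mt.mulVec a = 0 := haker
      have := congrFun this k
      simpa [Matrix.mulVec, dotProduct] using this
    set U : V → ℝ := fun x => ∑ j, a j * u (jf j) x with hU
    -- orthogonality to low eigenfunctions
    have hUv : ∀ k : Fin (Fintype.card V), k < i' → iprod m U (v k) = 0 := by
      intro k hk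
      have hkN : k.val < N := hk
      have hkeq : k = kf ⟨k.val, hkN⟩ := by simp [hkf, Fin.ext_iff]
      rw [hU, iprod_sum_left, hkeq]
      rw [← haM ⟨k.val, hkN⟩]
      exact Finset.sum_congr rfl fun j _ => by rw [hMt]; simp [mul_comm]
    -- iprodOn computations
    have hUj : ∀ j : Fin (N+1), iprodOn m B U (u (jf j)) = a j := by
      intro j
      rw [hU, iprodOn_sum_left]
      have : ∀ k ∈ (univ : Finset (Fin (N+1))),
          a k * iprodOn m B (u (jf k)) (u (jf j)) = if k = j then a k else 0 := by
        intro k _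
        rw [huortho (jf k) (jf j)]
        have : (jf k = jf j) ↔ (k = j) := by
          constructor
          · intro h
            have h2 := congrArg Fin.val h
            exact Fin.ext h2
          · intro h; rw [h]
        rw [if_congr this rfl rfl]
        split <;> simp
      rw [Finset.sum_congr rfl this, Finset.sum_ite_eq' univ j a, if_pos (mem_univ j)]
    have hSB : iprodOn m B U U = ∑ j, a j ^ 2 := by
      rw [hU, iprodOn_sum_left]
      refine Finset.sum_congr rfl fun j _ => ?_
      rw [iprodOn_comm, hUj j]
      ring
    have hSBpos : 0 < ∑ j, a j ^ 2 := by
      have : ∃ j, a j ≠ 0 := by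
        by_contra h
        push_neg at h
        exact ha0 (funext h)
      obtain ⟨j₀, hj₀⟩ := this
      exact Finset.sum_pos' (fun j _ => sq_nonneg _)
        ⟨j₀, mem_univ j₀, by positivity⟩
    -- Laplacian of U
    have hlapU : ∀ z, lap m w U z = ∑ j, a j * lap m w (u (jf j)) z := by
      intro z; rw [hU]; exact lap_sum m w univ a (fun j => u (jf j)) z
    have hharmU : ∀ y, y ∉ B → lap m w U y = 0 := by
      intro y hy
      rw [hlapU y]
      exact Finset.sum_eq_zero fun j _ => by rw [huharm (jf j) y hy, mul_zero]
    have hNeuU : ∀ x ∈ B, - lap m w U x = ∑ j, a j * (σ (jf j) * u (jf j) x) := by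
      intro x hx
      rw [hlapU x, ← Finset.sum_neg_distrib]
      exact Finset.sum_congr rfl fun j _ => by
        linear_combination (a j) * (hueig (jf j) x hx)
    -- Q computation
    have hQsplit : iprod m (fun x => - lap m w U x) U
        = iprodOn m B (fun x => - lap m w U x) U := by
      unfold iprod iprodOn
      rw [← Finset.sum_add_sum_compl B (fun x => - lap m w U x * U x * m x)]
      have : ∑ x ∈ Bᶜ, - lap m w U x * U x * m x = 0 :=
        Finset.sum_eq_zero fun x hx => by
          rw [hharmU x (Finset.mem_compl.mp hx)]; ring
      rw [this, add_zero]
    have hQ : iprod m (fun x => - lap m w U x) U = ∑ j, a j ^ 2 * σ (jf j) := by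
      rw [hQsplit]
      unfold iprodOn
      have h1 : ∀ x ∈ B, (- lap m w U x) * U x * m x
          = ∑ j, a j * (σ (jf j) * (u (jf j) x * U x * m x)) := fun x hx => by
        rw [hNeuU x hx, Finset.sum_mul, Finset.sum_mul]
        exact Finset.sum_congr rfl fun j _ => by ring
      rw [Finset.sum_congr rfl h1, Finset.sum_comm]
      refine Finset.sum_congr rfl fun j _ => ?_
      rw [← Finset.mul_sum]
      have : ∑ x ∈ B, σ (jf j) * (u (jf j) x * U x * m x)
          = σ (jf j) * iprodOn m B (u (jf j)) U := by
        unfold iprodOn; rw [Finset.mul_sum]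
      rw [this, iprodOn_comm, hUj j]
      ring
    -- chain of inequalities
    set S : ℝ := iprod m U U with hS
    set SB : ℝ := ∑ j, a j ^ 2 with hSB2
    have hSsplit : S = SB + ∑ x ∈ Bᶜ, U x * U x * m x := by
      rw [hS, ← hSB]
      unfold iprod iprodOn
      rw [← Finset.sum_add_sum_compl B (fun x => U x * U x * m x)]
    have hcnn : 0 ≤ ∑ x ∈ Bᶜ, U x * U x * m x :=
      Finset.sum_nonneg fun x _ => mul_nonneg (mul_self_nonneg _) (hm x).le
    have hQle : iprod m (fun x => - lap m w U x) U ≤ σ i * SB := by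
      rw [hQ, hSB2, Finset.mul_sum]
      apply Finset.sum_le_sum
      intro j _
      have : σ (jf j) ≤ σ i := hσmono (by
        rw [Fin.le_def]; exact Nat.lt_succ_iff.mp j.isLt)
      nlinarith [sq_nonneg (a j)]
    have hQge : μ i' * S ≤ iprod m (fun x => - lap m w U x) U :=
      eigen_lb m w μ hμmono v hveig hvortho i' U hUv
    have hSBS : SB ≤ S := by rw [hSsplit]; linarith
    have hμσ : μ i' = σ i := heq.symm
    -- all inequalities are equalities
    have hSeq : S = SB := by nlinarith
    have hQeq : iprod m (fun x => - lap m w U x) U = σ i * SB := by nlinarith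
    -- U vanishes outside B
    have hUzero : ∀ y, y ∉ B → U y = 0 := by
      intro y hy
      have hzero : ∑ x ∈ Bᶜ, U x * U x * m x = 0 := by
        rw [hSsplit] at hSeq; linarith
      have h := (Finset.sum_eq_zero_iff_of_nonneg
        (fun x _ => mul_nonneg (mul_self_nonneg (U x)) (hm x).le)).mp hzero y
        (Finset.mem_compl.mpr hy)
      have := mul_eq_zero.mp h
      rcases this with h' | h'
      · rcases mul_self_eq_zero.mp h' with h''
        exact h''
      · exact absurd h' (hm y).ne'
    -- σ-rigidity on coefficients
    have haσ : ∀ j : Fin (N+1), a j * σ (jf j) = a j * σ i := by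
      intro j
      have hsum : ∑ j, a j ^ 2 * (σ i - σ (jf j)) = 0 := by
        have h2 : ∑ j, a j ^ 2 * σ (jf j) = σ i * ∑ j, a j ^ 2 := by
          rw [← hQ, hQeq, hSB2]
        have h3 : ∑ j, a j ^ 2 * (σ i - σ (jf j))
            = σ i * (∑ j, a j ^ 2) - ∑ j, a j ^ 2 * σ (jf j) := by
          rw [Finset.mul_sum, ← Finset.sum_sub_distrib]
          exact Finset.sum_congr rfl fun j _ => by ring
        rw [h3, h2, sub_self]
      have hnn : ∀ j ∈ (univ : Finset (Fin (N+1))),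
          (0:ℝ) ≤ a j ^ 2 * (σ i - σ (jf j)) := by
        intro j _
        have hσle : σ (jf j) ≤ σ i := hσmono (by
          rw [Fin.le_def]; exact Nat.lt_succ_iff.mp j.isLt)
        nlinarith [sq_nonneg (a j)]
      have hterm := (Finset.sum_eq_zero_iff_of_nonneg hnn).mp hsum j (mem_univ j)
      rcases mul_eq_zero.mp hterm with h | h
      · rw [pow_eq_zero_iff (by norm_num : 2 ≠ 0) |>.mp h]; ring
      · have : σ (jf j) = σ i := by linarith
        rw [this]
    -- conclude
    refine ⟨U, ?_, ?_, hUzero, hharmU⟩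
    · intro h
      rw [h] at hSB
      simp [iprodOn] at hSB
      rw [← hSB] at hSBpos
      exact lt_irrefl 0 hSBpos
    · intro x
      by_cases hx : x ∈ B
      · rw [hNeuU x hx]
        have : ∑ j, a j * (σ (jf j) * u (jf j) x) = σ i * U x := by
          rw [hU, Finset.mul_sum]
          exact Finset.sum_congr rfl fun j _ => by
            linear_combination (u (jf j) x) * (haσ j)
        rw [this, heq]
      · rw [hharmU x hx, hUzero x hx, neg_zero, mul_zero]


end GraphSteklov
end

section
/- Let (G,m,w,B) be a connected weighted finite graph with boundary. Suppose (G,m,w) satisfies the Bakry–Émery curvature-dimension condition CD(K,n) with K > 0 and n > 1, i.e., Γ₂(f,f)(x) ≥ (1/n)(Δf(x))² + K·Γ(f,f)(x) for every f : V → ℝ and every x ∈ V. Then σ₂ ≥ nK/(n−1). -/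
/-!
Sum `CD(K,n)` against `m` for a Steklov eigenfunction `u` of `σ₂` normalized on `B`.
Since `u` is harmonic in the interior, Green's formula turns `Σ Γ₂(u,u) m` into
`Σ (Δu)² m = σ₂²` and `Σ Γ(u,u) m` into the Dirichlet energy `σ₂`, whence
`σ₂²/n + K σ₂ ≤ σ₂²`. Connectivity gives `σ₂ > 0`: an eigenfunction of eigenvalue `0` has
zero energy, hence is constant, and two constants cannot be orthonormal on `B`.
-/

open Finset Real

namespace GraphSteklov

variable {V : Type*}

theorem IsWeight.nonneg {G : SimpleGraph V} {m : V → ℝ} {w : V → V → ℝ}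
    (hW : IsWeight G m w) (x y : V) : 0 ≤ w x y := by
  by_cases h : G.Adj x y
  · exact (hW.2.2.1 x y h).le
  · exact (hW.2.2.2 x y h).ge

variable [Fintype V]

section GreenFormula

variable {m : V → ℝ} {w : V → V → ℝ}

noncomputable def dirichletForm (w : V → V → ℝ) (f g : V → ℝ) : ℝ :=
  (1 / 2) * ∑ x, ∑ y, (f y - f x) * (g y - g x) * w x y

theorem dirichletForm_comm (w : V → V → ℝ) (f g : V → ℝ) :
    dirichletForm w f g = dirichletForm w g f := by
  simp only [dirichletForm, mul_comm (f _ - f _)]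

theorem dirichletForm_self_nonneg (hw : ∀ x y, 0 ≤ w x y) (f : V → ℝ) :
    0 ≤ dirichletForm w f f := by
  refine mul_nonneg (by norm_num) (sum_nonneg fun x _ => sum_nonneg fun y _ => ?_)
  exact mul_nonneg (mul_self_nonneg _) (hw x y)

theorem lap_mul_measure (w : V → V → ℝ) (u : V → ℝ) {x : V} (hm : m x ≠ 0) :
    lap m w u x * m x = ∑ y, (u y - u x) * w x y := by
  rw [lap, one_div, inv_mul_eq_div, div_mul_cancel₀ _ hm]

theorem sum_mul_lap_mul_measure (hm : ∀ x, m x ≠ 0) (hw : ∀ x y, w x y = w y x)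
    (f g : V → ℝ) :
    ∑ x, f x * lap m w g x * m x = - dirichletForm w f g := by
  set S := ∑ x, ∑ y, f x * ((g y - g x) * w x y)
  have hS : ∑ x, f x * lap m w g x * m x = S := by
    simp_rw [mul_assoc, lap_mul_measure w g (hm _), mul_sum]
    rfl
  have hswap : S = ∑ x, ∑ y, -(f y * ((g y - g x) * w x y)) := by
    rw [Finset.sum_comm]
    refine sum_congr rfl fun x _ => sum_congr rfl fun y _ => ?_
    rw [hw]
    ring
  have h2S : S + S = -∑ x, ∑ y, (f y - f x) * (g y - g x) * w x y := by
    nth_rewrite 2 [hswap]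
    simp only [S, ← sum_add_distrib, ← sum_neg_distrib]
    refine sum_congr rfl fun x _ => sum_congr rfl fun y _ => ?_
    ring
  rw [hS, dirichletForm]
  linarith

theorem sum_lap_mul_measure (hm : ∀ x, m x ≠ 0) (hw : ∀ x y, w x y = w y x) (g : V → ℝ) :
    ∑ x, lap m w g x * m x = 0 := by
  simpa [dirichletForm] using sum_mul_lap_mul_measure hm hw (fun _ => 1) g

theorem sum_gammaOp_mul_measure (hm : ∀ x, m x ≠ 0) (hw : ∀ x y, w x y = w y x)
    (f g : V → ℝ) :
    ∑ x, gammaOp m w f g x * m x = dirichletForm w f g := by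
  have hsplit : ∑ x, gammaOp m w f g x * m x
      = (∑ x, lap m w (f * g) x * m x - ∑ x, f x * lap m w g x * m x
          - ∑ x, g x * lap m w f x * m x) / 2 := by
    rw [← sum_sub_distrib, ← sum_sub_distrib, sum_div]
    refine sum_congr rfl fun x _ => ?_
    rw [gammaOp]
    ring
  rw [hsplit, sum_lap_mul_measure hm hw, sum_mul_lap_mul_measure hm hw,
    sum_mul_lap_mul_measure hm hw, dirichletForm_comm w g f]
  ring

theorem sum_gamma2Op_mul_measure (hm : ∀ x, m x ≠ 0) (hw : ∀ x y, w x y = w y x)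
    (f : V → ℝ) :
    ∑ x, gamma2Op m w f x * m x = ∑ x, lap m w f x ^ 2 * m x := by
  have hsplit : ∑ x, gamma2Op m w f x * m x
      = (∑ x, lap m w (gammaOp m w f f) x * m x) / 2
        - ∑ x, gammaOp m w f (lap m w f) x * m x := by
    rw [sum_div, ← sum_sub_distrib]
    refine sum_congr rfl fun x _ => ?_
    rw [gamma2Op]
    ring
  have hsq : ∑ x, lap m w f x ^ 2 * m x = ∑ x, lap m w f x * lap m w f x * m x := by
    simp only [sq]
  rw [hsplit, hsq, sum_lap_mul_measure hm hw, sum_gammaOp_mul_measure hm hw,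
    sum_mul_lap_mul_measure hm hw, dirichletForm_comm w f]
  ring

theorem integrated_curvatureDimension (hm : ∀ x, 0 < m x) (hw : ∀ x y, w x y = w y x)
    {K n : ℝ} {f : V → ℝ}
    (hCD : ∀ x, (1 / n) * lap m w f x ^ 2 + K * gammaOp m w f f x ≤ gamma2Op m w f x) :
    (1 / n) * ∑ x, lap m w f x ^ 2 * m x + K * dirichletForm w f f
      ≤ ∑ x, lap m w f x ^ 2 * m x := by
  have hm' : ∀ x, m x ≠ 0 := fun x => (hm x).ne'
  conv_rhs => rw [← sum_gamma2Op_mul_measure hm' hw]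
  rw [← sum_gammaOp_mul_measure hm' hw, mul_sum, mul_sum, ← sum_add_distrib]
  refine sum_le_sum fun x _ => ?_
  calc (1 / n) * (lap m w f x ^ 2 * m x) + K * (gammaOp m w f f x * m x)
      = ((1 / n) * lap m w f x ^ 2 + K * gammaOp m w f f x) * m x := by ring
    _ ≤ gamma2Op m w f x * m x := mul_le_mul_of_nonneg_right (hCD x) (hm x).le

end GreenFormula

theorem IsWeight.eq_of_adj_of_dirichletForm_self_eq_zero {G : SimpleGraph V} {m : V → ℝ}
    {w : V → V → ℝ} (hW : IsWeight G m w) {f : V → ℝ} (hf : dirichletForm w f f = 0)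
    {x y : V} (hxy : G.Adj x y) : f x = f y := by
  have hterm : ∀ x y, 0 ≤ (f y - f x) * (f y - f x) * w x y :=
    fun x y => mul_nonneg (mul_self_nonneg _) (hW.nonneg x y)
  have hsum : ∑ x, ∑ y, (f y - f x) * (f y - f x) * w x y = 0 := by
    rw [dirichletForm] at hf
    linarith
  rw [Fintype.sum_eq_zero_iff_of_nonneg (fun x => sum_nonneg fun y _ => hterm x y)] at hsum
  have hxy0 := (Fintype.sum_eq_zero_iff_of_nonneg (hterm x)).mp (congrFun hsum x)
  have := congrFun hxy0 y
  simp only [Pi.zero_apply, mul_eq_zero, (hW.2.2.1 x y hxy).ne',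
    or_false, sub_eq_zero, or_self] at this
  exact this.symm

theorem IsWeight.exists_eq_const_of_dirichletForm_self_eq_zero {G : SimpleGraph V}
    {m : V → ℝ} {w : V → V → ℝ} (hW : IsWeight G m w) (hG : G.Connected) {f : V → ℝ}
    (hf : dirichletForm w f f = 0) : ∃ c, f = Function.const V c := by
  obtain ⟨x₀⟩ := hG.nonempty
  refine ⟨f x₀, funext fun y => ?_⟩
  obtain ⟨p⟩ := hG.preconnected y x₀
  induction p with
  | nil => rfl
  | cons hadj _ ih => exact (hW.eq_of_adj_of_dirichletForm_self_eq_zero hf hadj).trans ih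

section Steklov

variable {m : V → ℝ} {w : V → V → ℝ} {B : Finset V}

def IsSteklovEigenfunction (m : V → ℝ) (w : V → V → ℝ) (B : Finset V) (σ : ℝ)
    (u : V → ℝ) : Prop :=
  (∀ y, y ∉ B → lap m w u y = 0) ∧ ∀ x ∈ B, - lap m w u x = σ * u x

namespace IsSteklovEigenfunction

variable {σ : ℝ} {u : V → ℝ}

theorem sum_mul_lap_mul_measure (hu : IsSteklovEigenfunction m w B σ u) (f : V → ℝ) :
    ∑ x, f x * lap m w u x * m x = -σ * iprodOn m B f u := by
  rw [iprodOn, mul_sum, ← sum_subset (subset_univ B) fun x _ hx => by rw [hu.1 x hx]; ring]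
  refine sum_congr rfl fun x hx => ?_
  rw [← neg_neg (lap m w u x), hu.2 x hx]
  ring

theorem dirichletForm_eq (hu : IsSteklovEigenfunction m w B σ u) (hm : ∀ x, m x ≠ 0)
    (hw : ∀ x y, w x y = w y x) (f : V → ℝ) :
    dirichletForm w f u = σ * iprodOn m B f u := by
  have := GraphSteklov.sum_mul_lap_mul_measure hm hw f u
  rw [hu.sum_mul_lap_mul_measure] at this
  linarith

theorem sum_lap_sq_mul_measure (hu : IsSteklovEigenfunction m w B σ u) :
    ∑ x, lap m w u x ^ 2 * m x = σ ^ 2 * iprodOn m B u u := by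
  have hB : iprodOn m B (lap m w u) u = -σ * iprodOn m B u u := by
    rw [iprodOn, iprodOn, mul_sum]
    refine sum_congr rfl fun x hx => ?_
    rw [← neg_neg (lap m w u x), hu.2 x hx]
    ring
  simp only [sq]
  rw [hu.sum_mul_lap_mul_measure, hB]
  ring

end IsSteklovEigenfunction

theorem IsSteklovSpectrum.second_pos {G : SimpleGraph V} (hG : G.Connected)
    (hW : IsWeight G m w) {σ : Fin B.card → ℝ} (hσ : IsSteklovSpectrum m w B σ)
    (hB2 : 1 < B.card) : 0 < σ ⟨1, hB2⟩ := by
  obtain ⟨hmono, u, hharm, heig, horth⟩ := hσ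
  have hform : ∀ i, dirichletForm w (u i) (u i) = σ i := fun i => by
    rw [IsSteklovEigenfunction.dirichletForm_eq ⟨hharm i, heig i⟩ (fun x => (hW.1 x).ne')
      hW.2.1, horth, if_pos rfl, mul_one]
  have hnonneg : ∀ i, 0 ≤ σ i := fun i => hform i ▸ dirichletForm_self_nonneg hW.nonneg _
  set i₀ : Fin B.card := ⟨0, by omega⟩
  set i₁ : Fin B.card := ⟨1, hB2⟩
  by_contra! h₁
  have h₀ : σ i₀ ≤ 0 := (hmono (Fin.mk_le_mk.mpr zero_le_one)).trans h₁
  obtain ⟨c₀, hc₀⟩ := hW.exists_eq_const_of_dirichletForm_self_eq_zero hG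
    ((hform i₀).trans (le_antisymm h₀ (hnonneg i₀)))
  obtain ⟨c₁, hc₁⟩ := hW.exists_eq_const_of_dirichletForm_self_eq_zero hG
    ((hform i₁).trans (le_antisymm h₁ (hnonneg i₁)))
  have h00 := horth i₀ i₀
  have h11 := horth i₁ i₁
  have h01 := horth i₀ i₁
  have hne : i₀ ≠ i₁ := Fin.ne_of_val_ne zero_ne_one
  simp only [iprodOn, hc₀, hc₁, Function.const_apply, ← mul_sum, ↓reduceIte, if_neg hne]
    at h00 h11 h01
  have key : (c₀ * c₁ * ∑ x ∈ B, m x) ^ 2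
      = (c₀ * c₀ * ∑ x ∈ B, m x) * (c₁ * c₁ * ∑ x ∈ B, m x) := by ring
  rw [h00, h11, h01] at key
  norm_num at key

end Steklov

theorem lichnerowicz_bakry_emery_general
    {V : Type*} [Fintype V]
    (G : SimpleGraph V) (m : V → ℝ) (w : V → V → ℝ) (B : Finset V)
    (hG : G.Connected) (hW : IsWeight G m w)
    (K n : ℝ) (hn : 1 < n)
    (hCD : ∀ f : V → ℝ, ∀ x : V,
      (1 / n) * (lap m w f x) ^ 2 + K * gammaOp m w f f x ≤ gamma2Op m w f x)
    (σ : Fin B.card → ℝ) (hσ : IsSteklovSpectrum m w B σ)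
    (hB2 : 1 < B.card) :
    n * K / (n - 1) ≤ σ ⟨1, hB2⟩ := by
  have hσ₁ := hσ.second_pos hG hW hB2
  obtain ⟨-, u, hharm, heig, horth⟩ := hσ
  set i₁ : Fin B.card := ⟨1, hB2⟩
  have hu : IsSteklovEigenfunction m w B (σ i₁) (u i₁) := ⟨hharm i₁, heig i₁⟩
  have hCD₁ := integrated_curvatureDimension hW.1 hW.2.1 (hCD (u i₁))
  rw [hu.sum_lap_sq_mul_measure, hu.dirichletForm_eq (fun x => (hW.1 x).ne') hW.2.1, horth,
    if_pos rfl, mul_one, mul_one] at hCD₁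
  -- dividing `σ²/n + Kσ ≤ σ²` by `σ > 0`
  have hK : K ≤ (1 - 1 / n) * σ i₁ := by
    refine le_of_mul_le_mul_right ?_ hσ₁
    linarith
  rw [div_le_iff₀ (by linarith)]
  calc n * K ≤ n * ((1 - 1 / n) * σ i₁) := by gcongr
    _ = σ i₁ * (n - 1) := by field_simp

/-- Lichnerowicz-type estimate: if `(G,m,w)` satisfies the Bakry–Émery
curvature-dimension condition `CD(K,n)` with `K > 0` and `n > 1`, then
`σ₂ ≥ nK/(n-1)`. -/
theorem lichnerowicz_bakry_emery
    {V : Type*} [Fintype V] [DecidableEq V]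
    (G : SimpleGraph V) (m : V → ℝ) (w : V → V → ℝ) (B : Finset V)
    (hG : G.Connected) (hW : IsWeight G m w) (hB : IsBoundary G B)
    (K n : ℝ) (hK : 0 < K) (hn : 1 < n)
    (hCD : ∀ f : V → ℝ, ∀ x : V,
      (1 / n) * (lap m w f x) ^ 2 + K * gammaOp m w f f x ≤ gamma2Op m w f x)
    (σ : Fin B.card → ℝ) (hσ : IsSteklovSpectrum m w B σ)
    (hB2 : 1 < B.card) :
    n * K / (n - 1) ≤ σ ⟨1, hB2⟩ :=
  lichnerowicz_bakry_emery_general G m w B hG hW K n hn hCD σ hσ hB2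

end GraphSteklov
end
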